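/- Let a : ℕ → ℂ with partial sums A(x) = ∑_{n ≤ x} a(n) satisfying |A(t)| ≤ c·t·(log t)^{−α−1} for all t ≥ 2, where c > 0 and α > 0 are real constants. Then the series ∑_{n=1}^∞ a(n)/n^s converges for every real s ≥ 1, and lim_{s→1⁺} ∑_{n=1}^∞ a(n)/n^s = ∑_{n=1}^∞ a(n)/n. -/

import Mathlib

/-! By Abel summation with the weight `t ^ (-s)`, a block `∑_{N < n ≤ M} a n / n ^ s` is bounded
by the boundary terms `M ^ (-s) A(M)`, `N ^ (-s) A(N)` and by `s ∫_N^M t ^ (-s-1) |A(t)| dt`. The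
hypothesis makes each boundary term `O(log N ^ (-α))` and the integrand `O(1 / (t log t ^ (α + 1)))`,
whose integral is `log N ^ (-α) / α`. So the tails are `O((1 + s / α) log N ^ (-α))`, uniformly for
`s` in `[1, S]`: the partial sums are uniformly Cauchy there, and their limit, a uniform limit of
continuous functions of `s`, is continuous on `[1, 2]`, in particular from the right at `1`. -/

open Finset Filter Real MeasureTheory Topology

lemma Real.one_le_log_of_three_le {t : ℝ} (ht : 3 ≤ t) : 1 ≤ log t :=
  (le_log_iff_exp_le (by linarith)).2 (by linarith [exp_one_lt_d9])

lemma Finset.sum_Icc_zero_update_zero {M : Type*} [AddCommMonoid M] (a : ℕ → M) (k : ℕ) :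
    ∑ n ∈ Icc 0 k, Function.update a 0 0 n = ∑ n ∈ Icc 1 k, a n := by
  rw [Icc_eq_cons_Ioc (Nat.zero_le k), sum_cons, Function.update_self, zero_add,
    ← Icc_add_one_left_eq_Ioc, zero_add]
  exact sum_congr rfl fun n hn => Function.update_of_ne (by grind) _ _

lemma Finset.sum_Icc_one_sub_sum_Icc_one {M : Type*} [AddCommGroup M] (a : ℕ → M) {N K : ℕ}
    (hNK : N ≤ K) : ∑ n ∈ Icc 1 K, a n - ∑ n ∈ Icc 1 N, a n = ∑ n ∈ Ioc N K, a n := by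
  rw [← zero_add 1, Icc_add_one_left_eq_Ioc, Icc_add_one_left_eq_Ioc,
    ← sum_Ioc_consecutive a (Nat.zero_le N) hNK, add_sub_cancel_left]

lemma Real.continuousOn_inv_mul_log_rpow (p : ℝ) :
    ContinuousOn (fun t => t⁻¹ * log t ^ p) (Set.Ioi 1) := fun t ht =>
  ((continuousAt_inv₀ (by linarith [ht.out])).mul
    ((continuousAt_log (by linarith [ht.out])).rpow_const
      (Or.inl (log_pos ht).ne'))).continuousWithinAt

lemma Real.integral_inv_mul_log_rpow {α a b : ℝ} (hα : α ≠ 0) (ha : 1 < a) (hab : a ≤ b) :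
    ∫ t in a..b, t⁻¹ * log t ^ (-α - 1) = (log a ^ (-α) - log b ^ (-α)) / α := by
  have hIoi : Set.uIcc a b ⊆ Set.Ioi 1 := by
    rw [Set.uIcc_of_le hab]
    exact fun t ht => ha.trans_le ht.1
  have hderiv : ∀ t ∈ Set.uIcc a b,
      HasDerivAt (fun t => -log t ^ (-α) / α) (t⁻¹ * log t ^ (-α - 1)) t := by
    intro t ht
    have ht1 : 1 < t := hIoi ht
    have := (((hasDerivAt_log (by linarith)).rpow_const (p := -α)
      (Or.inl (log_pos ht1).ne')).neg).div_const α
    exact this.congr_deriv (by field_simp)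
  rw [intervalIntegral.integral_eq_sub_of_hasDerivAt hderiv
    ((continuousOn_inv_mul_log_rpow _).mono hIoi).intervalIntegrable]
  ring

lemma uniformCauchySeqOn_of_norm_sub_le {ι E : Type*} [SeminormedAddCommGroup E]
    {F : ℕ → ι → E} {S : Set ι} {b : ℕ → ℝ} (hb : Tendsto b atTop (𝓝 0))
    (hF : ∀ᶠ N in atTop, ∀ M ≥ N, ∀ x ∈ S, ‖F M x - F N x‖ ≤ b N) :
    UniformCauchySeqOn F atTop S := by
  rw [Metric.uniformCauchySeqOn_iff]
  intro ε hε
  obtain ⟨N, hbN, hFN⟩ := ((hb.eventually (gt_mem_nhds (half_pos hε))).and hF).exists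
  refine ⟨N, fun m hm n hn x hx => ?_⟩
  calc dist (F m x) (F n x) ≤ ‖F m x - F N x‖ + ‖F n x - F N x‖ := by
        simpa only [dist_eq_norm] using dist_triangle_right (F m x) (F n x) (F N x)
    _ < ε := by linarith [hFN m hm x hx, hFN n hn x hx]

lemma continuous_sum_div_cpow (a : ℕ → ℂ) (N : ℕ) :
    Continuous fun s : ℝ => ∑ n ∈ Icc 1 N, a n / (n : ℂ) ^ (s : ℂ) := by
  refine continuous_finsetSum _ fun n hn => ?_
  have hn0 : (n : ℂ) ≠ 0 := Nat.cast_ne_zero.2 (by grind)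
  exact continuous_const.div (Complex.continuous_ofReal.const_cpow (Or.inl hn0))
    fun s => Complex.cpow_ne_zero_iff.2 (Or.inl hn0)

lemma norm_sum_Ioc_div_cpow_le (a : ℕ → ℂ) {s : ℝ} (hs : 0 ≤ s) {N M : ℕ} (hN : 0 < N)
    (hNM : N ≤ M) :
    ‖∑ n ∈ Ioc N M, a n / (n : ℂ) ^ (s : ℂ)‖ ≤
      (M : ℝ) ^ (-s) * ‖∑ n ∈ Icc 1 M, a n‖ + (N : ℝ) ^ (-s) * ‖∑ n ∈ Icc 1 N, a n‖ +
        s * ∫ t in Set.Ioc (N : ℝ) M, t ^ (-s - 1) * ‖∑ n ∈ Icc 1 ⌊t⌋₊, a n‖ := by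
  set w : ℝ → ℂ := fun t => ((t ^ (-s) : ℝ) : ℂ)
  have hN0 : (0 : ℝ) < N := by exact_mod_cast hN
  have hw : ∀ t : ℝ, 0 < t → HasDerivAt w ((-s * t ^ (-s - 1) : ℝ) : ℂ) t := fun t ht =>
    (hasDerivAt_rpow_const (Or.inl ht.ne')).ofReal_comp
  have hderiv_w : Set.EqOn (deriv w) (fun t => ((-s * t ^ (-s - 1) : ℝ) : ℂ)) (Set.Ioi 0) :=
    fun t ht => (hw t ht).deriv
  have hNM_Ioi : Set.Icc (N : ℝ) M ⊆ Set.Ioi 0 := fun t ht => hN0.trans_le ht.1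
  have hderiv_w_cont : ContinuousOn (deriv w) (Set.Icc (N : ℝ) M) := by
    refine ContinuousOn.congr ?_ (hderiv_w.mono hNM_Ioi)
    exact Complex.continuous_ofReal.comp_continuousOn
      (continuousOn_const.mul (continuousOn_id.rpow_const fun t ht => Or.inl (hNM_Ioi ht).ne'))
  have abel := sum_mul_eq_sub_sub_integral_mul' (Function.update a 0 0) hNM
    (fun t ht => (hw t (hNM_Ioi ht)).differentiableAt) hderiv_w_cont.integrableOn_Icc
  -- Mathlib's Abel summation uses partial sums over `Icc 0 k`; zeroing `a 0` turns them into ours.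
  simp only [sum_Icc_zero_update_zero] at abel
  have hsum : ∑ n ∈ Ioc N M, a n / (n : ℂ) ^ (s : ℂ) =
      ∑ n ∈ Ioc N M, w n * Function.update a 0 0 n := by
    refine sum_congr rfl fun n hn => ?_
    have hn0 : n ≠ 0 := by grind
    rw [Function.update_of_ne hn0]
    simp only [w, Complex.ofReal_cpow (Nat.cast_nonneg n), Complex.ofReal_neg, Complex.cpow_neg,
      Complex.ofReal_natCast, div_eq_inv_mul]
  have hw_norm : ∀ t : ℝ, 0 ≤ t → ‖w t‖ = t ^ (-s) := fun t ht =>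
    by simp only [w, Complex.norm_real, norm_of_nonneg (rpow_nonneg ht _)]
  have hint : ‖∫ t in Set.Ioc (N : ℝ) M, deriv w t * ∑ n ∈ Icc 1 ⌊t⌋₊, a n‖ ≤
      s * ∫ t in Set.Ioc (N : ℝ) M, t ^ (-s - 1) * ‖∑ n ∈ Icc 1 ⌊t⌋₊, a n‖ := by
    refine (norm_integral_le_integral_norm _).trans_eq ?_
    rw [← integral_const_mul]
    refine setIntegral_congr_fun measurableSet_Ioc fun t ht => ?_
    have ht0 : 0 < t := hN0.trans ht.1
    rw [norm_mul, hderiv_w ht0, Complex.norm_real, norm_mul, norm_neg, norm_of_nonneg hs,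
      norm_of_nonneg (rpow_nonneg ht0.le _), mul_assoc]
  rw [hsum, abel]
  refine (norm_sub_le _ _).trans (add_le_add ((norm_sub_le _ _).trans_eq ?_) hint)
  rw [norm_mul, norm_mul, hw_norm _ (Nat.cast_nonneg _), hw_norm _ (Nat.cast_nonneg _)]

section Dirichlet

variable {a : ℕ → ℂ} {c α : ℝ}

lemma rpow_neg_mul_norm_sum_Icc_le
    (hA : ∀ t : ℝ, 2 ≤ t → ‖∑ n ∈ Icc 1 ⌊t⌋₊, a n‖ ≤ c * t * log t ^ (-α - 1))
    {s t : ℝ} (hs : 1 ≤ s) (ht : 2 ≤ t) :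
    t ^ (-s) * ‖∑ n ∈ Icc 1 ⌊t⌋₊, a n‖ ≤ c * log t ^ (-α - 1) := by
  have hA_nonneg : 0 ≤ c * t * log t ^ (-α - 1) := (norm_nonneg _).trans (hA t ht)
  calc t ^ (-s) * ‖∑ n ∈ Icc 1 ⌊t⌋₊, a n‖ ≤ t ^ (-1 : ℝ) * (c * t * log t ^ (-α - 1)) :=
        mul_le_mul (rpow_le_rpow_of_exponent_le (by linarith) (by linarith)) (hA t ht)
          (norm_nonneg _) (by positivity)
    _ = c * log t ^ (-α - 1) := by
        rw [rpow_neg_one]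
        field_simp

lemma norm_sum_Ioc_div_cpow_le_of_norm_sum_Icc_le
    (hA : ∀ t : ℝ, 2 ≤ t → ‖∑ n ∈ Icc 1 ⌊t⌋₊, a n‖ ≤ c * t * log t ^ (-α - 1))
    (hc : 0 ≤ c) (hα : 0 < α) {s : ℝ} (hs : 1 ≤ s) {N M : ℕ} (hN : 3 ≤ N) (hNM : N ≤ M) :
    ‖∑ n ∈ Ioc N M, a n / (n : ℂ) ^ (s : ℂ)‖ ≤ (2 + s / α) * c * log N ^ (-α) := by
  have hN3 : (3 : ℝ) ≤ N := by exact_mod_cast hN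
  have hlogN : 1 ≤ log N := one_le_log_of_three_le hN3
  have hboundary : ∀ K : ℕ, N ≤ K → (K : ℝ) ^ (-s) * ‖∑ n ∈ Icc 1 K, a n‖ ≤ c * log N ^ (-α) := by
    intro K hK
    have hNK : (N : ℝ) ≤ K := by exact_mod_cast hK
    calc (K : ℝ) ^ (-s) * ‖∑ n ∈ Icc 1 K, a n‖ ≤ c * log K ^ (-α - 1) := by
          simpa using rpow_neg_mul_norm_sum_Icc_le hA hs (by linarith : (2 : ℝ) ≤ K)
      _ ≤ c * log N ^ (-α - 1) := mul_le_mul_of_nonneg_left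
          (rpow_le_rpow_of_nonpos (by linarith) (log_le_log (by linarith) hNK) (by linarith)) hc
      _ ≤ c * log N ^ (-α) :=
          mul_le_mul_of_nonneg_left (rpow_le_rpow_of_exponent_le hlogN (by linarith)) hc
  have hintegral : ∫ t in Set.Ioc (N : ℝ) M, t ^ (-s - 1) * ‖∑ n ∈ Icc 1 ⌊t⌋₊, a n‖ ≤
      c * (log N ^ (-α) / α) := by
    have hNM' : (N : ℝ) ≤ M := by exact_mod_cast hNM
    have hIoi : Set.Icc (N : ℝ) M ⊆ Set.Ioi 1 := fun t ht =>
      show (1 : ℝ) < t by linarith [ht.1]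
    calc ∫ t in Set.Ioc (N : ℝ) M, t ^ (-s - 1) * ‖∑ n ∈ Icc 1 ⌊t⌋₊, a n‖
        ≤ ∫ t in Set.Ioc (N : ℝ) M, c * (t⁻¹ * log t ^ (-α - 1)) := by
          refine integral_mono_of_nonneg
            ((ae_restrict_iff' measurableSet_Ioc).2 (ae_of_all _ fun t ht => ?_))
            ((((continuousOn_inv_mul_log_rpow _).mono hIoi).integrableOn_Icc.mono_set
              Set.Ioc_subset_Icc_self).const_mul c)
            ((ae_restrict_iff' measurableSet_Ioc).2 (ae_of_all _ fun t ht => ?_))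
          · have ht0 : (0 : ℝ) ≤ t := by linarith [ht.1]
            positivity
          · have ht0 : (0 : ℝ) < t := by linarith [ht.1]
            calc t ^ (-s - 1) * ‖∑ n ∈ Icc 1 ⌊t⌋₊, a n‖
                = t⁻¹ * (t ^ (-s) * ‖∑ n ∈ Icc 1 ⌊t⌋₊, a n‖) := by
                  rw [rpow_sub_one ht0.ne']
                  ring
              _ ≤ t⁻¹ * (c * log t ^ (-α - 1)) := mul_le_mul_of_nonneg_left
                  (rpow_neg_mul_norm_sum_Icc_le hA hs (by linarith [ht.1])) (by positivity)
              _ = c * (t⁻¹ * log t ^ (-α - 1)) := by ring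
      _ = c * ∫ t in (N : ℝ)..M, t⁻¹ * log t ^ (-α - 1) := by
          rw [integral_const_mul, intervalIntegral.integral_of_le hNM']
      _ ≤ c * (log N ^ (-α) / α) := by
          rw [integral_inv_mul_log_rpow hα.ne' (by linarith) hNM']
          gcongr
          linarith [rpow_nonneg (log_nonneg (by linarith : (1 : ℝ) ≤ M)) (-α)]
  calc ‖∑ n ∈ Ioc N M, a n / (n : ℂ) ^ (s : ℂ)‖
      ≤ (M : ℝ) ^ (-s) * ‖∑ n ∈ Icc 1 M, a n‖ + (N : ℝ) ^ (-s) * ‖∑ n ∈ Icc 1 N, a n‖ +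
        s * ∫ t in Set.Ioc (N : ℝ) M, t ^ (-s - 1) * ‖∑ n ∈ Icc 1 ⌊t⌋₊, a n‖ :=
        norm_sum_Ioc_div_cpow_le a (by linarith) (by omega) hNM
    _ ≤ c * log N ^ (-α) + c * log N ^ (-α) + s * (c * (log N ^ (-α) / α)) :=
        add_le_add (add_le_add (hboundary M hNM) (hboundary N le_rfl))
          (mul_le_mul_of_nonneg_left hintegral (by linarith))
    _ = (2 + s / α) * c * log N ^ (-α) := by ring

lemma uniformCauchySeqOn_sum_div_cpow
    (hA : ∀ t : ℝ, 2 ≤ t → ‖∑ n ∈ Icc 1 ⌊t⌋₊, a n‖ ≤ c * t * log t ^ (-α - 1))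
    (hc : 0 ≤ c) (hα : 0 < α) (S : ℝ) :
    UniformCauchySeqOn (fun N (s : ℝ) => ∑ n ∈ Icc 1 N, a n / (n : ℂ) ^ (s : ℂ)) atTop
      (Set.Icc 1 S) := by
  have hlog : Tendsto (fun N : ℕ => log N ^ (-α)) atTop (𝓝 0) :=
    (tendsto_rpow_neg_atTop hα).comp (tendsto_log_atTop.comp tendsto_natCast_atTop_atTop)
  refine uniformCauchySeqOn_of_norm_sub_le (by simpa using hlog.const_mul ((2 + S / α) * c)) ?_
  filter_upwards [eventually_ge_atTop 3] with N hN M hNM s hs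
  rw [sum_Icc_one_sub_sum_Icc_one _ hNM]
  refine (norm_sum_Ioc_div_cpow_le_of_norm_sum_Icc_le hA hc hα hs.1 hN hNM).trans ?_
  have : 0 ≤ log N ^ (-α) := rpow_nonneg (log_nonneg (by norm_cast; omega)) _
  gcongr
  exact hs.2

end Dirichlet

theorem dirichlet_series_converges_and_continuous (a : ℕ → ℂ) (c α : ℝ)
    (hc : 0 < c) (hα : 0 < α)
    (hA : ∀ t : ℝ, 2 ≤ t →
      ‖∑ n ∈ Finset.Icc 1 ⌊t⌋₊, a n‖ ≤ c * t * Real.log t ^ (-α - 1)) :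
    ∃ f : ℝ → ℂ,
      (∀ s : ℝ, 1 ≤ s →
        Filter.Tendsto (fun N : ℕ => ∑ n ∈ Finset.Icc 1 N, a n / (n : ℂ) ^ (s : ℂ))
          Filter.atTop (nhds (f s))) ∧
      Filter.Tendsto f (nhdsWithin 1 (Set.Ioi 1)) (nhds (f 1)) := by
  set F : ℕ → ℝ → ℂ := fun N s => ∑ n ∈ Icc 1 N, a n / (n : ℂ) ^ (s : ℂ)
  have hcauchy (S : ℝ) : UniformCauchySeqOn F atTop (Set.Icc 1 S) :=
    uniformCauchySeqOn_sum_div_cpow hA hc.le hα S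
  have hconv (s : ℝ) (hs : 1 ≤ s) : Tendsto (F · s) atTop (𝓝 (limUnder atTop (F · s))) :=
    ((hcauchy s).cauchySeq ⟨hs, le_rfl⟩).tendsto_limUnder
  refine ⟨fun s => limUnder atTop (F · s), hconv, ?_⟩
  have hcont : ContinuousOn (fun s => limUnder atTop (F · s)) (Set.Icc 1 2) :=
    ((hcauchy 2).tendstoUniformlyOn_of_tendsto fun s hs => hconv s hs.1).continuousOn
      (Frequently.of_forall fun N => (continuous_sum_div_cpow a N).continuousOn)
  exact ((continuousWithinAt_Icc_iff_Ici one_lt_two).1 (hcont 1 ⟨le_rfl, one_le_two⟩)).mono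
    Set.Ioi_subset_Ici_self
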